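/- arXiv:1707.09908 — 4 statements merged into one kernel-verified Lean document; each statement's English description precedes it below -/
import Mathlib

section
/- Let T be an unrooted binary phylogenetic tree with leaf set X, n = |X| ≥ 3, and edge weights w : E(T) → ℝ. Then for every leaf i the Shapley value of i in the phylogenetic tree game (X, PD) is given by the linear formula SV_i = Σ_{k ∈ E(T)} (f(i,k)/(n·c(i,k))) · w(k); i.e., the Shapley value is the linear transformation of the edge-weight vector whose (i,k) coefficient is f(i,k)/(n·c(i,k)). -/
open Finset

noncomputable section
open scoped Classical

/-- The set of leaves (degree-1 vertices) of a graph. -/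
def phyloLeaves {V : Type*} [Fintype V] (G : SimpleGraph V) : Finset V :=
  Finset.univ.filter fun v => G.degree v = 1

/-- Split count `c(i,k)`: the number of leaves in the component of `T - k` containing `i`. -/
def splitC {V : Type*} [Fintype V] (G : SimpleGraph V) (i : V) (k : Sym2 V) : ℕ :=
  ((phyloLeaves G).filter fun v => (G.deleteEdges {k}).Reachable i v).card

/-- Split count `f(i,k)`: the number of leaves in the component of `T - k` not containing `i`. -/
def splitF {V : Type*} [Fintype V] (G : SimpleGraph V) (i : V) (k : Sym2 V) : ℕ :=
  ((phyloLeaves G).filter fun v => ¬ (G.deleteEdges {k}).Reachable i v).card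

/-- Phylogenetic diversity of a set `S` of leaves: the sum of the weights of all edges `e`
such that both components of `T - e` contain an element of `S`. -/
def PD {V : Type*} [Fintype V] (G : SimpleGraph V) (w : Sym2 V → ℝ) (S : Finset V) : ℝ :=
  ∑ e ∈ G.edgeFinset,
    if ∃ a ∈ S, ∃ b ∈ S, ¬ (G.deleteEdges {e}).Reachable a b then w e else 0

/-- The Shapley value of leaf `i` in the phylogenetic tree game. -/
def SV {V : Type*} [Fintype V] (G : SimpleGraph V) (w : Sym2 V → ℝ) (i : V) : ℝ :=
  (1 / ((phyloLeaves G).card.factorial : ℝ)) *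
    ∑ S ∈ (phyloLeaves G).powerset.filter (fun S => i ∈ S),
      ((S.card - 1).factorial : ℝ) * (((phyloLeaves G).card - S.card).factorial : ℝ) *
        (PD G w S - PD G w (S.erase i))

/-- The type of leaves of `G`. -/
abbrev PLeaf {V : Type*} [Fintype V] (G : SimpleGraph V) := {v : V // G.degree v = 1}

/-- The type of edges of `G`. -/
abbrev PEdge {V : Type*} (G : SimpleGraph V) := ↥G.edgeSet

/-- The Shapley transformation matrix, with rows indexed by leaves and columns by edges;
its `(i,k)` entry is `f(i,k)/(n·c(i,k))`. -/
def shapleyMatrix {V : Type*} [Fintype V] (G : SimpleGraph V) :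
    Matrix (PLeaf G) (PEdge G) ℝ := fun i k =>
  (splitF G i.1 k.1 : ℝ) / (((phyloLeaves G).card : ℝ) * (splitC G i.1 k.1 : ℝ))

/-!
The Shapley value is linear in the game, and `PD G w` is the `w`-weighted sum over the edges `e`
of the game "`e` separates two members of the coalition". Deleting an edge from a connected graph
leaves at most two components, so this game is `[S meets the side of i] + [S meets the other
side] - [S ≠ ∅]`. In the game `[S meets A]` a player outside `A` never contributes, and a player
`i ∈ A` gets Shapley value `1/|A|`: its marginal contribution is `1` exactly when `S \ {i}` avoids
`A`, and the hockey-stick identity sums the weights of these coalitions. Hence the edge `e`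
contributes `(1/c(i,e) - 1/n) · w(e) = f(i,e)/(n·c(i,e)) · w(e)` to the value of `i`.
-/

open scoped Nat

theorem Nat.mul_sum_range_choose_mul_factorial_mul_factorial (f d : ℕ) :
    (d + 1) * ∑ b ∈ range (f + 1), f.choose b * b ! * (f + d - b)! = (f + d + 1)! := by
  have hterm : ∀ b ∈ range (f + 1),
      f.choose b * b ! * (f + d - b)! = f ! * d ! * (f - b + d).choose d := by
    intro b hb
    have hbf : b ≤ f := Nat.lt_succ_iff.mp (mem_range.mp hb)
    apply Nat.eq_of_mul_eq_mul_right (Nat.factorial_pos (f - b))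
    calc f.choose b * b ! * (f + d - b)! * (f - b)!
        = f.choose b * b ! * (f - b)! * (f - b + d)! := by
          rw [show f + d - b = f - b + d by omega]; ring
      _ = f ! * ((f - b + d).choose d * (f - b)! * d !) := by
          rw [Nat.choose_mul_factorial_mul_factorial hbf, Nat.add_choose_mul_factorial_mul_factorial]
      _ = f ! * d ! * (f - b + d).choose d * (f - b)! := by ring
  have hockey : ∑ b ∈ range (f + 1), (f - b + d).choose d = (f + d + 1).choose (d + 1) := by
    rw [← Nat.sum_range_add_choose, ← sum_range_reflect]
    refine sum_congr rfl fun b hb => ?_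
    have hbf : b ≤ f := Nat.lt_succ_iff.mp (mem_range.mp hb)
    rw [show f + 1 - 1 - b = f - b by omega, Nat.sub_sub_self hbf]
  rw [sum_congr rfl hterm, ← mul_sum, hockey, show f + d + 1 = f + (d + 1) by ring,
    ← Nat.add_choose_mul_factorial_mul_factorial f (d + 1), Nat.factorial_succ]
  ring

theorem Finset.mul_sum_powerset_factorial_mul_factorial {α : Type*} (D : Finset α) (d : ℕ) :
    (d + 1) * ∑ B ∈ D.powerset, (#B)! * (#D + d - #B)! = (#D + d + 1)! := by
  rw [sum_powerset_apply_card (fun b => b ! * (#D + d - b)!),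
    ← Nat.mul_sum_range_choose_mul_factorial_mul_factorial]
  simp only [smul_eq_mul, mul_assoc]

section ShapleyValue

variable {α : Type*}

def shapleyValue (X : Finset α) (i : α) : (Finset α → ℝ) →ₗ[ℝ] ℝ where
  toFun v := (1 / ((#X)! : ℝ)) *
    ∑ S ∈ X.powerset.filter (fun S => i ∈ S),
      (((#S - 1)! : ℕ) : ℝ) * (((#X - #S)! : ℕ) : ℝ) * (v S - v (S.erase i))
  map_add' v v' := by
    simp only [Pi.add_apply, ← mul_add, ← sum_add_distrib]
    congr 1
    exact sum_congr rfl fun S _ => by ring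
  map_smul' r v := by
    simp only [Pi.smul_apply, smul_eq_mul, RingHom.id_apply, mul_sum]
    exact sum_congr rfl fun S _ => by ring

theorem Finset.sum_filter_mem_ite_erase_subset {X D : Finset α} {i : α} (hi : i ∈ X) (hD : D ⊆ X)
    (hiD : i ∉ D) (g : Finset α → ℝ) :
    ∑ S ∈ X.powerset.filter (fun S => i ∈ S), (if S.erase i ⊆ D then g S else 0) =
      ∑ B ∈ D.powerset, g (insert i B) := by
  rw [← sum_filter]
  symm
  apply sum_nbij' (insert i) (fun S => S.erase i)
  · intro B hB
    simp only [mem_filter, mem_powerset] at hB ⊢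
    exact ⟨⟨insert_subset hi (hB.trans hD), mem_insert_self i B⟩,
      by rwa [erase_insert (fun h => hiD (hB h))]⟩
  · intro S hS
    simp only [mem_filter, mem_powerset] at hS ⊢
    exact hS.2
  · intro B hB
    simp only [mem_powerset] at hB
    exact erase_insert (fun h => hiD (hB h))
  · intro S hS
    simp only [mem_filter, mem_powerset] at hS
    exact insert_erase hS.1.2
  · intro B _
    rfl

def meetsGame (p : α → Prop) (S : Finset α) : ℝ :=
  if ∃ a ∈ S, p a then 1 else 0

theorem shapleyValue_meetsGame_of_not {X : Finset α} {i : α} {p : α → Prop} (hp : ¬ p i) :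
    shapleyValue X i (meetsGame p) = 0 := by
  have hmarginal : ∀ S : Finset α, meetsGame p S - meetsGame p (S.erase i) = 0 := by
    intro S
    have : (∃ a ∈ S, p a) ↔ ∃ a ∈ S.erase i, p a :=
      ⟨fun ⟨a, ha, hpa⟩ => ⟨a, mem_erase.2 ⟨fun h => hp (h ▸ hpa), ha⟩, hpa⟩,
        fun ⟨a, ha, hpa⟩ => ⟨a, mem_of_mem_erase ha, hpa⟩⟩
    simp only [meetsGame, this, sub_self]
  simp [shapleyValue, hmarginal]

theorem shapleyValue_meetsGame {X : Finset α} {i : α} {p : α → Prop} [DecidablePred p]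
    (hi : i ∈ X) (hp : p i) :
    shapleyValue X i (meetsGame p) = 1 / #(X.filter p) := by
  set D := X.filter (fun a => ¬ p a)
  obtain ⟨d, hd⟩ : ∃ d, #(X.filter p) = d + 1 :=
    Nat.exists_eq_add_one.mpr (card_pos.mpr ⟨i, mem_filter.mpr ⟨hi, hp⟩⟩)
  have hX : #X = #D + d + 1 := by
    rw [← card_filter_add_card_filter_not (s := X) p, hd]; ring
  have hmarginal : ∀ S ∈ X.powerset.filter (fun S => i ∈ S),
      meetsGame p S - meetsGame p (S.erase i) = if S.erase i ⊆ D then 1 else 0 := by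
    intro S hS
    simp only [mem_filter, mem_powerset] at hS
    have hD : S.erase i ⊆ D ↔ ¬ ∃ a ∈ S.erase i, p a := by
      simp only [D, subset_iff, mem_filter, not_exists, not_and]
      exact ⟨fun h a ha => (h ha).2, fun h a ha => ⟨hS.1 (mem_of_mem_erase ha), h a ha⟩⟩
    simp only [meetsGame, hD, if_pos (⟨i, hS.2, hp⟩ : ∃ a ∈ S, p a)]
    split_ifs <;> norm_num
  have hsum : ∑ S ∈ X.powerset.filter (fun S => i ∈ S),
      (((#S - 1)! : ℕ) : ℝ) * (((#X - #S)! : ℕ) : ℝ) *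
        (meetsGame p S - meetsGame p (S.erase i)) =
      ∑ B ∈ D.powerset, (((#B)! * (#D + d - #B)! : ℕ) : ℝ) := by
    rw [sum_congr rfl fun S hS => by rw [hmarginal S hS, mul_ite, mul_one, mul_zero],
      sum_filter_mem_ite_erase_subset hi (filter_subset _ X) (by simp [hp])]
    refine sum_congr rfl fun B hB => ?_
    rw [card_insert_of_notMem fun h => (mem_filter.mp (mem_powerset.mp hB h)).2 hp, hX]
    push_cast
    rfl
  have hweights : (d + 1) * ∑ B ∈ D.powerset, (#B)! * (#D + d - #B)! = (#X)! :=
    hX ▸ mul_sum_powerset_factorial_mul_factorial D d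
  change (1 / ((#X)! : ℝ)) * _ = _
  rw [hsum, hd, ← Nat.cast_sum]
  have hfac : ((#X)! : ℝ) ≠ 0 := by positivity
  field_simp
  rw [mul_comm]
  exact_mod_cast hweights

end ShapleyValue

namespace SimpleGraph

variable {V : Type*} {G : SimpleGraph V}

theorem Walk.reachable_deleteEdges_or {x u v : V} (p : G.Walk x u) :
    (G.deleteEdges {s(u, v)}).Reachable x u ∨ (G.deleteEdges {s(u, v)}).Reachable x v := by
  induction p with
  | nil => exact Or.inl .rfl
  | @cons a b c hab p ih =>
    by_cases hedge : s(a, b) = s(c, v)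
    · rcases Sym2.eq_iff.mp hedge with ⟨rfl, rfl⟩ | ⟨rfl, rfl⟩
      · exact Or.inl .rfl
      · exact Or.inr .rfl
    · have hadj : (G.deleteEdges {s(c, v)}).Adj a b := deleteEdges_adj.mpr ⟨hab, hedge⟩
      exact ih.imp hadj.reachable.trans hadj.reachable.trans

theorem Connected.reachable_deleteEdges_of_not_reachable (hc : G.Connected) (e : Sym2 V)
    {i a b : V} (ha : ¬ (G.deleteEdges {e}).Reachable i a)
    (hb : ¬ (G.deleteEdges {e}).Reachable i b) : (G.deleteEdges {e}).Reachable a b := by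
  induction e using Sym2.ind with
  | h u v =>
    have hend : ∀ x, (G.deleteEdges {s(u, v)}).Reachable x u ∨
        (G.deleteEdges {s(u, v)}).Reachable x v :=
      fun x => (hc.preconnected x u).some.reachable_deleteEdges_or
    rcases hend i with hi | hi <;> rcases hend a with ha' | ha' <;>
      rcases hend b with hb' | hb'
    all_goals first
      | exact ha'.trans hb'.symm
      | exact (ha (hi.trans ha'.symm)).elim
      | exact (hb (hi.trans hb'.symm)).elim

theorem Connected.exists_not_reachable_deleteEdges_iff (hc : G.Connected) (e : Sym2 V) (i : V)
    (S : Finset V) :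
    (∃ a ∈ S, ∃ b ∈ S, ¬ (G.deleteEdges {e}).Reachable a b) ↔
      (∃ a ∈ S, (G.deleteEdges {e}).Reachable i a) ∧
        ∃ b ∈ S, ¬ (G.deleteEdges {e}).Reachable i b := by
  constructor
  · rintro ⟨a, ha, b, hb, hab⟩
    by_cases hia : (G.deleteEdges {e}).Reachable i a
    · exact ⟨⟨a, ha, hia⟩, b, hb, fun hib => hab (hia.symm.trans hib)⟩
    by_cases hib : (G.deleteEdges {e}).Reachable i b
    · exact ⟨⟨b, hb, hib⟩, a, ha, hia⟩
    exact (hab (hc.reachable_deleteEdges_of_not_reachable e hia hib)).elim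
  · rintro ⟨⟨a, ha, hia⟩, b, hb, hib⟩
    exact ⟨a, ha, b, hb, fun hab => hib (hia.trans hab)⟩

end SimpleGraph

section PhylogeneticDiversity

variable {V : Type*} [Fintype V] {G : SimpleGraph V}

def separationGame (G : SimpleGraph V) (e : Sym2 V) (S : Finset V) : ℝ :=
  if ∃ a ∈ S, ∃ b ∈ S, ¬ (G.deleteEdges {e}).Reachable a b then 1 else 0

theorem PD_eq_sum_smul_separationGame (w : Sym2 V → ℝ) :
    PD G w = ∑ e ∈ G.edgeFinset, w e • separationGame G e := by
  funext S
  simp only [PD, separationGame, Finset.sum_apply, Pi.smul_apply, smul_eq_mul, mul_ite, mul_one,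
    mul_zero]

theorem SimpleGraph.Connected.separationGame_eq (hc : G.Connected) (e : Sym2 V) (i : V) :
    separationGame G e =
      meetsGame (fun v => (G.deleteEdges {e}).Reachable i v) +
        meetsGame (fun v => ¬ (G.deleteEdges {e}).Reachable i v) - meetsGame (fun _ => True) := by
  funext S
  have hnonempty : (∃ a ∈ S, True) ↔ (∃ a ∈ S, (G.deleteEdges {e}).Reachable i a) ∨
      ∃ b ∈ S, ¬ (G.deleteEdges {e}).Reachable i b :=
    ⟨fun ⟨a, ha, _⟩ => (em _).imp (⟨a, ha, ·⟩) (⟨a, ha, ·⟩),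
      fun h => h.elim (fun ⟨a, ha, _⟩ => ⟨a, ha, trivial⟩) (fun ⟨a, ha, _⟩ => ⟨a, ha, trivial⟩)⟩
  simp only [separationGame, meetsGame, Pi.add_apply, Pi.sub_apply,
    hc.exists_not_reachable_deleteEdges_iff e i, hnonempty]
  split_ifs <;> simp_all

theorem SimpleGraph.Connected.shapleyValue_separationGame (hc : G.Connected) (e : Sym2 V) {i : V}
    (hi : i ∈ phyloLeaves G) :
    shapleyValue (phyloLeaves G) i (separationGame G e) =
      (splitF G i e : ℝ) / (((phyloLeaves G).card : ℝ) * (splitC G i e : ℝ)) := by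
  have hsplit : splitC G i e + splitF G i e = (phyloLeaves G).card :=
    card_filter_add_card_filter_not _
  have hc_pos : 0 < splitC G i e := card_pos.mpr ⟨i, mem_filter.mpr ⟨hi, .rfl⟩⟩
  rw [hc.separationGame_eq e i, map_sub, map_add, shapleyValue_meetsGame hi .rfl,
    shapleyValue_meetsGame_of_not (p := fun v => ¬ _) (not_not.mpr .rfl),
    shapleyValue_meetsGame hi trivial]
  simp only [filter_true]
  change 1 / (splitC G i e : ℝ) + 0 - 1 / ((phyloLeaves G).card : ℝ) = _
  rw [add_zero, ← hsplit]
  push_cast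
  field_simp
  ring

end PhylogeneticDiversity

theorem shapley_linear_formula_general {V : Type*} [Fintype V] (G : SimpleGraph V)
    (hT : G.IsTree) (w : Sym2 V → ℝ)
    (i : V) (hi : G.degree i = 1) :
    SV G w i =
      ∑ k ∈ G.edgeFinset,
        (splitF G i k : ℝ) / (((phyloLeaves G).card : ℝ) * (splitC G i k : ℝ)) * w k := by
  have hiX : i ∈ phyloLeaves G := mem_filter.mpr ⟨mem_univ i, hi⟩
  calc SV G w i = shapleyValue (phyloLeaves G) i (PD G w) := rfl
    _ = ∑ k ∈ G.edgeFinset, w k * shapleyValue (phyloLeaves G) i (separationGame G k) := by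
      simp only [PD_eq_sum_smul_separationGame, map_sum, map_smul, smul_eq_mul]
    _ = _ := sum_congr rfl fun k _ => by
      rw [hT.connected.shapleyValue_separationGame k hiX, mul_comm]

/-- For an unrooted binary phylogenetic tree with `n ≥ 3` leaves and edge
weights `w`, the Shapley value of every leaf `i` is the linear expression
`SV_i = Σ_{k ∈ E(T)} (f(i,k)/(n·c(i,k))) · w(k)`. -/
theorem shapley_linear_formula {V : Type*} [Fintype V] (G : SimpleGraph V)
    (hT : G.IsTree) (hdeg : ∀ v, G.degree v = 1 ∨ G.degree v = 3)
    (hn : 3 ≤ (phyloLeaves G).card) (w : Sym2 V → ℝ)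
    (i : V) (hi : G.degree i = 1) :
    SV G w i =
      ∑ k ∈ G.edgeFinset,
        (splitF G i k : ℝ) / (((phyloLeaves G).card : ℝ) * (splitC G i k : ℝ)) * w k :=
  shapley_linear_formula_general G hT w i hi
end
end

section
/- Let T be an unrooted binary phylogenetic tree with n ≥ 4 leaves and let M be its Shapley transformation matrix, an n × (2n−3) real matrix. Then the null space of M (the space of vectors v ∈ ℝ^{2n−3} with Mv = 0) has dimension exactly n − 3; equivalently, M has rank n. -/
/-!
A leaf `i` is alone on its side of its own pendant edge and shares its side of any other
pendant edge with the remaining `n - 1` leaves. Hence the columns of the `n` pendant edges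
form the matrix `a • 1 + b • J` with `b = 1 / (n (n - 1))`, `a = (n - 2) / (n - 1)` and
`a + n b = 1`, which is invertible for `n ≥ 3`, so `M` has full row rank `n`. Counting
degrees, a binary tree with `n` leaves has `2n - 3` edges, and rank–nullity gives nullity
`n - 3`.
-/

open Finset

noncomputable section
open scoped Classical

namespace SimpleGraph

variable {V : Type*} {G : SimpleGraph V} [LocallyFinite G]

lemma eq_of_adj_of_degree_eq_one {v u w : V} (hv : G.degree v = 1) (hu : G.Adj v u)
    (hw : G.Adj v w) : w = u :=
  (degree_eq_one_iff_existsUnique_adj.mp hv).unique hw hu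

lemma reachable_deleteEdges_pendant_iff {v u w : V} (hv : G.degree v = 1) (hu : G.Adj v u) :
    (G.deleteEdges {s(v, u)}).Reachable v w ↔ w = v := by
  refine ⟨fun ⟨p⟩ => ?_, fun h => h ▸ Reachable.refl _⟩
  cases p with
  | nil => rfl
  | cons hadj _ =>
    rw [deleteEdges_adj] at hadj
    exact absurd (by rw [eq_of_adj_of_degree_eq_one hv hu hadj.1]; rfl) hadj.2

lemma Connected.reachable_deleteEdges_pendant (hG : G.Connected) {v a b : V}
    (hv : G.degree v = 1) (u : V) (ha : a ≠ v) (hb : b ≠ v) :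
    (G.deleteEdges {s(v, u)}).Reachable a b := by
  let f : G.induce {v}ᶜ →g G.deleteEdges {s(v, u)} :=
    { toFun := Subtype.val
      map_rel' := fun {x y} hxy => by
        have hx : (x : V) ≠ v := x.2
        have hy : (y : V) ≠ v := y.2
        simp_all [deleteEdges_adj] }
  exact ((hG.induce_compl_singleton_of_degree_eq_one hv).preconnected ⟨a, ha⟩ ⟨b, hb⟩).map f

end SimpleGraph

namespace Matrix

theorem isUnit_smul_one_add_of_const {ι K : Type*} [Fintype ι] [DecidableEq ι] [Field K]
    {a b : K} (ha : a ≠ 0) (hab : a + Fintype.card ι * b ≠ 0) :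
    IsUnit (a • (1 : Matrix ι ι K) + of fun _ _ => b) := by
  refine mulVec_injective_iff_isUnit.mp fun x y hxy => ?_
  set z := x - y
  have hz : ∀ i, a * z i + b * ∑ j, z j = 0 := fun i => by
    have h : (a • (1 : Matrix ι ι K) + of fun _ _ => b) *ᵥ z = 0 := by
      rw [mulVec_sub, hxy, sub_self]
    have hi := congrFun h i
    simp only [add_mulVec, smul_mulVec, one_mulVec] at hi
    simpa [mulVec, dotProduct, mul_sum] using hi
  have hsum : ∑ j, z j = 0 := by
    have h := Finset.sum_eq_zero (s := univ) fun i _ => hz i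
    rw [sum_add_distrib, ← mul_sum, sum_const, card_univ, nsmul_eq_mul] at h
    have h' : (a + Fintype.card ι * b) * ∑ j, z j = 0 := by linear_combination h
    exact (mul_eq_zero.mp h').resolve_left hab
  funext i
  have := hz i
  rw [hsum, mul_zero, add_zero, mul_eq_zero] at this
  exact sub_eq_zero.mp (this.resolve_left ha)

end Matrix

section ShapleyMatrix

variable {V : Type*} [Fintype V] {G : SimpleGraph V}

lemma card_pLeaf : Fintype.card (PLeaf G) = #(phyloLeaves G) := by
  rw [Fintype.card_subtype]; rfl

lemma mem_phyloLeaves (i : PLeaf G) : i.1 ∈ phyloLeaves G := by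
  simp [phyloLeaves, i.2]

lemma exists_adj_of_pLeaf (i : PLeaf G) : ∃ u, G.Adj i.1 u :=
  G.degree_pos_iff_exists_adj _ |>.mp (by rw [i.2]; exact one_pos)

variable (G) in
def leafNeighbor (i : PLeaf G) : V := (exists_adj_of_pLeaf i).choose

variable (G) in
def pendantEdge (i : PLeaf G) : PEdge G :=
  ⟨s(i.1, leafNeighbor G i), (exists_adj_of_pLeaf i).choose_spec⟩

lemma splitF_add_splitC (i : V) (k : Sym2 V) :
    splitF G i k + splitC G i k = #(phyloLeaves G) := by
  rw [splitF, splitC, add_comm]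
  exact card_filter_add_card_filter_not _

lemma splitC_pendantEdge_self (i : PLeaf G) : splitC G i.1 (pendantEdge G i).1 = 1 := by
  rw [splitC, card_eq_one]
  refine ⟨i.1, eq_singleton_iff_unique_mem.mpr ⟨?_, fun v hv => ?_⟩⟩
  · exact mem_filter.mpr ⟨mem_phyloLeaves i, SimpleGraph.Reachable.refl _⟩
  · exact (SimpleGraph.reachable_deleteEdges_pendant_iff i.2
      (exists_adj_of_pLeaf i).choose_spec).mp (mem_filter.mp hv).2

lemma SimpleGraph.Connected.splitC_pendantEdge_of_ne (hG : G.Connected) {i j : PLeaf G}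
    (hij : i ≠ j) : splitC G i.1 (pendantEdge G j).1 = #(phyloLeaves G) - 1 := by
  have hji : j.1 ≠ i.1 := fun h => hij (Subtype.ext h).symm
  rw [splitC, ← card_erase_of_mem (mem_phyloLeaves j)]
  congr 1
  ext v
  simp only [mem_filter, mem_erase]
  constructor
  · rintro ⟨hv, hreach⟩
    refine ⟨fun hvj => hji ?_, hv⟩
    subst hvj
    exact (SimpleGraph.reachable_deleteEdges_pendant_iff j.2
      (exists_adj_of_pLeaf j).choose_spec).mp hreach.symm |>.symm
  · rintro ⟨hvj, hv⟩
    exact ⟨hv, hG.reachable_deleteEdges_pendant j.2 _ hji.symm hvj⟩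

lemma SimpleGraph.Connected.shapleyMatrix_apply_pendantEdge (hG : G.Connected) (i j : PLeaf G) :
    shapleyMatrix G i (pendantEdge G j) =
      if i = j then ((#(phyloLeaves G) : ℝ) - 1) / #(phyloLeaves G)
      else 1 / (#(phyloLeaves G) * ((#(phyloLeaves G) : ℝ) - 1)) := by
  have hF : ∀ k, (splitF G i.1 k : ℝ) = #(phyloLeaves G) - splitC G i.1 k := fun k => by
    rw [eq_sub_iff_add_eq]; exact_mod_cast splitF_add_splitC _ _
  rw [shapleyMatrix, hF]
  split_ifs with hij
  · subst hij
    rw [splitC_pendantEdge_self, Nat.cast_one, mul_one]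
  · have hn : 1 ≤ #(phyloLeaves G) := card_pos.mpr ⟨_, mem_phyloLeaves i⟩
    rw [hG.splitC_pendantEdge_of_ne hij, Nat.cast_sub hn, Nat.cast_one, sub_sub_cancel]

lemma SimpleGraph.Connected.isUnit_shapleyMatrix_submatrix_pendantEdge (hG : G.Connected)
    (hn : 3 ≤ #(phyloLeaves G)) :
    IsUnit ((shapleyMatrix G).submatrix id (pendantEdge G)) := by
  have hsub : (shapleyMatrix G).submatrix id (pendantEdge G) =
      (((#(phyloLeaves G) : ℝ) - 1) / #(phyloLeaves G)
          - 1 / (#(phyloLeaves G) * ((#(phyloLeaves G) : ℝ) - 1))) • 1 +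
        Matrix.of fun _ _ => 1 / (#(phyloLeaves G) * ((#(phyloLeaves G) : ℝ) - 1)) := by
    ext i j
    rw [Matrix.submatrix_apply, id, hG.shapleyMatrix_apply_pendantEdge]
    split_ifs with hij <;> simp [hij]
  have hcoeff : ∀ n : ℝ, 3 ≤ n → (n - 1) / n - 1 / (n * (n - 1)) = (n - 2) / (n - 1) ∧
      (n - 1) / n - 1 / (n * (n - 1)) + n * (1 / (n * (n - 1))) = 1 := fun n hn => by
    have hn0 : n ≠ 0 := by linarith
    have hn1 : n - 1 ≠ 0 := by linarith
    constructor <;> field_simp <;> ring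
  have hn' : (3 : ℝ) ≤ #(phyloLeaves G) := by exact_mod_cast hn
  obtain ⟨hdiag, hsum⟩ := hcoeff _ hn'
  rw [hsub]
  refine Matrix.isUnit_smul_one_add_of_const ?_ (by rw [card_pLeaf, hsum]; exact one_ne_zero)
  rw [hdiag]
  exact div_ne_zero (by linarith) (by linarith)

theorem SimpleGraph.IsTree.card_edgeFinset_of_degree_eq_one_or_three (hT : G.IsTree)
    (hdeg : ∀ v, G.degree v = 1 ∨ G.degree v = 3) :
    #G.edgeFinset = 2 * #(phyloLeaves G) - 3 := by
  have hsum : ∑ v, G.degree v + 2 * #(phyloLeaves G) = 3 * Fintype.card V := by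
    rw [phyloLeaves, card_filter, mul_sum, ← sum_add_distrib]
    calc ∑ v, (G.degree v + 2 * if G.degree v = 1 then 1 else 0) = ∑ _ : V, 3 :=
          sum_congr rfl fun v _ => by rcases hdeg v with h | h <;> simp [h]
      _ = 3 * Fintype.card V := by rw [sum_const, card_univ, smul_eq_mul, mul_comm]
  have := G.sum_degrees_eq_twice_card_edges
  have := hT.card_edgeFinset
  omega

end ShapleyMatrix

/-- For an unrooted binary phylogenetic tree with `n ≥ 4` leaves, the null
space of the Shapley transformation matrix has dimension exactly `n − 3`; equivalently, the
matrix has rank `n`. -/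
theorem shapley_matrix_nullity_rank {V : Type*} [Fintype V] (G : SimpleGraph V)
    (hT : G.IsTree) (hdeg : ∀ v, G.degree v = 1 ∨ G.degree v = 3)
    (hn : 4 ≤ (phyloLeaves G).card) :
    Module.finrank ℝ (LinearMap.ker (shapleyMatrix G).mulVecLin)
        = (phyloLeaves G).card - 3 ∧
    (shapleyMatrix G).rank = (phyloLeaves G).card := by
  have hrank : (shapleyMatrix G).rank = #(phyloLeaves G) := by
    refine le_antisymm (card_pLeaf (G := G) ▸ Matrix.rank_le_card_height _) ?_
    calc #(phyloLeaves G) = ((shapleyMatrix G).submatrix id (pendantEdge G)).rank := by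
          rw [Matrix.rank_of_isUnit _
            (hT.connected.isUnit_shapleyMatrix_submatrix_pendantEdge (by omega)), card_pLeaf]
      _ ≤ (shapleyMatrix G).rank := Matrix.rank_submatrix_le _ _ _
  refine ⟨?_, hrank⟩
  have hdim := LinearMap.finrank_range_add_finrank_ker (shapleyMatrix G).mulVecLin
  rw [← Matrix.rank, hrank, Module.finrank_pi, ← SimpleGraph.edgeFinset_card,
    hT.card_edgeFinset_of_degree_eq_one_or_three hdeg] at hdim
  omega
end
end

section
/- Let T be an unrooted binary phylogenetic tree with n ≥ 4 leaves, leaves indexed 1,…,n, edges ordered so that the n leaf-incident edges come first and the internal edges I_1,…,I_{n−3} occupy columns n+1,…,2n−3 of the Shapley transformation matrix M. For each internal edge I_k define the vector w_{I_k} ∈ ℝ^{2n−3} by (w_{I_k})_i = −(f(i,I_k) − 1)/((n−2)·c(i,I_k)) for 1 ≤ i ≤ n, (w_{I_k})_{n+k} = 1, and (w_{I_k})_j = 0 otherwise. Then M · w_{I_k} = 0 for every k = 1,…,n−3. -/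
open Finset

noncomputable section
open scoped Classical

/-!
In row `i` of `M w` only the pendant edges and `I` survive. At the pendant edge of a leaf `j` one
has `c(j, ·) = 1` and `f(i, ·) = 1` for `i ≠ j`, so the entry is `(n-1)/n` or `1/(n(n-1))`. The
counts `c(j, I)`, `f(j, I)` only depend on the side of `I` containing `j`, and both sides contain
leaves; with side sizes `c + f = n` this gives `∑ⱼ (f(j,I) - 1)/c(j,I) = c(f-1)/c + f(c-1)/f`,
which is `n - 2`. So the pendant entries of `w` sum to `-1`, and the row reduces to an identity in
`n` and `c(i,I)`.
-/

namespace SimpleGraph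

variable {V : Type*} {G : SimpleGraph V}

theorem Reachable.reachable_deleteEdges_or {v a : V} (h : G.Reachable v a) (b : V) :
    (G.deleteEdges {s(a, b)}).Reachable v a ∨ (G.deleteEdges {s(a, b)}).Reachable v b := by
  rw [reachable_iff_reflTransGen] at h
  induction h using Relation.ReflTransGen.head_induction_on with
  | refl => exact .inl .rfl
  | @head x y hxy _ ih =>
    by_cases he : s(x, y) = s(a, b)
    · rcases Sym2.eq_iff.mp he with ⟨rfl, -⟩ | ⟨rfl, -⟩
      · exact .inl .rfl
      · exact .inr .rfl
    · have hxy' : (G.deleteEdges {s(a, b)}).Adj x y := deleteEdges_adj.mpr ⟨hxy, he⟩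
      exact ih.imp hxy'.reachable.trans hxy'.reachable.trans

theorem Connected.reachable_deleteEdges_of_not_reachable_s2 (hG : G.Connected) (k : Sym2 V)
    {i j v : V} (hij : ¬ (G.deleteEdges {k}).Reachable i j)
    (hiv : ¬ (G.deleteEdges {k}).Reachable i v) : (G.deleteEdges {k}).Reachable j v := by
  induction k with | h a b => ?_
  rcases (hG i a).reachable_deleteEdges_or b with hi | hi <;>
  rcases (hG j a).reachable_deleteEdges_or b with hj | hj <;>
  rcases (hG v a).reachable_deleteEdges_or b with hv | hv <;>
  first
  | exact hj.trans hv.symm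
  | exact absurd (hi.trans hj.symm) hij
  | exact absurd (hi.trans hv.symm) hiv

theorem Reachable.deleteEdges_of_not_reachable {e : Sym2 V} {u v w x : V}
    (h : (G.deleteEdges {e}).Reachable u v) (hw : ¬ (G.deleteEdges {e}).Reachable u w) :
    (G.deleteEdges {s(w, x)}).Reachable u v := by
  obtain ⟨p⟩ := h
  have hp : s(w, x) ∉ p.edges := fun hp =>
    hw (p.takeUntil w (p.fst_mem_support_of_mem_edges hp)).reachable
  exact ⟨(p.toDeleteEdge _ hp).mapLe <| by
    rw [deleteEdges_deleteEdges]; exact deleteEdges_anti Set.subset_union_right⟩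

theorem IsAcyclic.reachable_deleteEdges_of_adj_of_adj (hG : G.IsAcyclic) {v w w' u : V}
    (hvw : G.Adj v w) (hww' : G.Adj w w') (hw'v : w' ≠ v)
    (h : (G.deleteEdges {s(w, w')}).Reachable w' u) :
    (G.deleteEdges {s(v, w)}).Reachable w u := by
  by_contra hwu
  have huv : G.Reachable u v :=
    (h.mono (deleteEdges_le _)).symm.trans (hww'.symm.reachable.trans hvw.symm.reachable)
  have huv' : (G.deleteEdges {s(v, w)}).Reachable u v :=
    (huv.reachable_deleteEdges_or w).resolve_right fun h' => hwu h'.symm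
  have hvw' : (G.deleteEdges {s(w, w')}).Adj v w := by
    refine deleteEdges_adj.mpr ⟨hvw, ?_⟩
    simp only [Set.mem_singleton_iff, Sym2.eq_iff]
    rintro (⟨rfl, -⟩ | ⟨rfl, -⟩)
    exacts [hvw.ne rfl, hw'v rfl]
  exact isAcyclic_iff_forall_adj_isBridge.mp hG hww'
    (h.trans ((huv'.deleteEdges_of_not_reachable fun h' => hwu h'.symm).trans
      hvw'.reachable)).symm

variable [Fintype V]

/-- Walk away from `v` until a leaf is reached; the branch beyond the current edge shrinks. -/
theorem IsAcyclic.exists_degree_eq_one_reachable_deleteEdges (hG : G.IsAcyclic) {v w : V}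
    (hvw : G.Adj v w) :
    ∃ ℓ, G.degree ℓ = 1 ∧ (G.deleteEdges {s(v, w)}).Reachable w ℓ := by
  by_cases hw : G.degree w = 1
  · exact ⟨w, hw, .rfl⟩
  have hdeg : 1 < #(G.neighborFinset w) := by
    rw [card_neighborFinset_eq_degree]
    have := G.degree_pos_iff_exists_adj w |>.mpr ⟨v, hvw.symm⟩
    omega
  obtain ⟨w', hw', hw'v⟩ := exists_mem_ne hdeg v
  have hww' : G.Adj w w' := (G.mem_neighborFinset w w').mp hw'
  obtain ⟨ℓ, hℓ, hr⟩ := hG.exists_degree_eq_one_reachable_deleteEdges hww'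
  exact ⟨ℓ, hℓ, hG.reachable_deleteEdges_of_adj_of_adj hvw hww' hw'v hr⟩
termination_by #{u | (G.deleteEdges {s(v, w)}).Reachable w u}
decreasing_by
  refine card_lt_card <| (ssubset_iff_of_subset fun u hu => ?_).mpr
    ⟨w, by simp, ?_⟩
  · simpa using hG.reachable_deleteEdges_of_adj_of_adj hvw hww' hw'v (by simpa using hu)
  · simpa using fun h => isAcyclic_iff_forall_adj_isBridge.mp hG hww' h.symm

theorem incidenceSet_subsingleton_of_degree_eq_one {j : V} (hj : G.degree j = 1) :
    (G.incidenceSet j).Subsingleton := fun e he e' he' =>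
  Finset.card_le_one.mp (card_incidenceFinset_eq_degree (G := G) (v := j) ▸ hj.le) e
    ((mem_incidenceFinset ..).mpr he) e' ((mem_incidenceFinset ..).mpr he')

theorem eq_of_reachable_deleteEdges_of_degree_eq_one {j v : V} {e : Sym2 V}
    (hj : G.degree j = 1) (he : e ∈ G.incidenceSet j) (h : (G.deleteEdges {e}).Reachable j v) :
    v = j := by
  obtain ⟨p⟩ := h
  cases p with
  | nil => rfl
  | cons hadj _ =>
    obtain ⟨hadj, hne⟩ := deleteEdges_adj.mp hadj
    exact hne (incidenceSet_subsingleton_of_degree_eq_one hj ⟨hadj, by simp⟩ he) |>.elim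

theorem Connected.not_adj_of_degree_eq_one (hG : G.Connected) {v j j' : V} (hv : G.degree v ≠ 1)
    (hj : G.degree j = 1) (hj' : G.degree j' = 1) : ¬ G.Adj j j' := fun hadj => by
  rcases (hG v j).reachable_deleteEdges_or j' with h | h
  · exact hv (eq_of_reachable_deleteEdges_of_degree_eq_one hj ⟨hadj, by simp⟩ h.symm ▸ hj)
  · exact hv (eq_of_reachable_deleteEdges_of_degree_eq_one hj' ⟨hadj, by simp⟩ h.symm ▸ hj')

end SimpleGraph

open SimpleGraph

section SplitCounts

variable {V : Type*} [Fintype V] {G : SimpleGraph V}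

theorem mem_phyloLeaves_s2 {v : V} : v ∈ phyloLeaves G ↔ G.degree v = 1 := by
  simp [phyloLeaves]

theorem splitC_add_splitF (i : V) (k : Sym2 V) :
    splitC G i k + splitF G i k = #(phyloLeaves G) :=
  card_filter_add_card_filter_not _

theorem splitC_pos {i : V} (hi : G.degree i = 1) (k : Sym2 V) : 0 < splitC G i k :=
  card_pos.mpr ⟨i, mem_filter.mpr ⟨mem_phyloLeaves_s2.mpr hi, .rfl⟩⟩

theorem SimpleGraph.IsTree.splitF_pos (hG : G.IsTree) {e : Sym2 V} (he : e ∈ G.edgeSet) (i : V) :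
    0 < splitF G i e := by
  induction e with | h a b => ?_
  have hab : G.Adj a b := he
  obtain ⟨ℓa, hℓa, hra⟩ := hG.isAcyclic.exists_degree_eq_one_reachable_deleteEdges hab.symm
  obtain ⟨ℓb, hℓb, hrb⟩ := hG.isAcyclic.exists_degree_eq_one_reachable_deleteEdges hab
  rw [Sym2.eq_swap] at hra
  have hsep : ¬ (G.deleteEdges {s(a, b)}).Reachable ℓa ℓb := fun h =>
    isAcyclic_iff_forall_adj_isBridge.mp hG.isAcyclic hab (hra.trans (h.trans hrb.symm))
  by_cases hia : (G.deleteEdges {s(a, b)}).Reachable i ℓa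
  · exact card_pos.mpr
      ⟨ℓb, mem_filter.mpr ⟨mem_phyloLeaves_s2.mpr hℓb, fun h => hsep (hia.symm.trans h)⟩⟩
  · exact card_pos.mpr ⟨ℓa, mem_filter.mpr ⟨mem_phyloLeaves_s2.mpr hℓa, hia⟩⟩

theorem splitC_eq_of_reachable {i j : V} {k : Sym2 V} (h : (G.deleteEdges {k}).Reachable i j) :
    splitC G j k = splitC G i k := by
  unfold splitC
  congr 1
  exact filter_congr fun v _ => ⟨h.trans, h.symm.trans⟩

theorem splitF_eq_of_reachable {i j : V} {k : Sym2 V} (h : (G.deleteEdges {k}).Reachable i j) :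
    splitF G j k = splitF G i k := by
  have := splitC_add_splitF (G := G) i k
  have := splitC_add_splitF (G := G) j k
  have := splitC_eq_of_reachable h
  omega

theorem SimpleGraph.Connected.splitC_eq_splitF_of_not_reachable (hG : G.Connected) {i j : V}
    {k : Sym2 V} (h : ¬ (G.deleteEdges {k}).Reachable i j) : splitC G j k = splitF G i k := by
  unfold splitC splitF
  congr 1
  exact filter_congr fun v _ =>
    ⟨fun hjv hiv => h (hiv.trans hjv.symm), hG.reachable_deleteEdges_of_not_reachable_s2 k h⟩

theorem SimpleGraph.Connected.splitF_eq_splitC_of_not_reachable (hG : G.Connected) {i j : V}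
    {k : Sym2 V} (h : ¬ (G.deleteEdges {k}).Reachable i j) : splitF G j k = splitC G i k := by
  have := splitC_add_splitF (G := G) i k
  have := splitC_add_splitF (G := G) j k
  have := hG.splitC_eq_splitF_of_not_reachable h
  omega

theorem SimpleGraph.Connected.sum_splitF_sub_one_div_splitC (hG : G.Connected) {i : V}
    {k : Sym2 V} (hc : splitC G i k ≠ 0) (hf : splitF G i k ≠ 0) :
    ∑ j ∈ phyloLeaves G, ((splitF G j k : ℝ) - 1) / splitC G j k =
      #(phyloLeaves G) - 2 := by
  have hsame : ∑ j ∈ (phyloLeaves G).filter fun j => (G.deleteEdges {k}).Reachable i j,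
      ((splitF G j k : ℝ) - 1) / splitC G j k =
        splitC G i k * ((splitF G i k - 1) / splitC G i k) := by
    rw [sum_congr rfl fun j hj => by rw [splitC_eq_of_reachable (mem_filter.mp hj).2,
      splitF_eq_of_reachable (mem_filter.mp hj).2], sum_const, nsmul_eq_mul]
    rfl
  have hother : ∑ j ∈ (phyloLeaves G).filter fun j => ¬ (G.deleteEdges {k}).Reachable i j,
      ((splitF G j k : ℝ) - 1) / splitC G j k =
        splitF G i k * ((splitC G i k - 1) / splitF G i k) := by
    rw [sum_congr rfl fun j hj => by
      rw [hG.splitC_eq_splitF_of_not_reachable (mem_filter.mp hj).2,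
        hG.splitF_eq_splitC_of_not_reachable (mem_filter.mp hj).2], sum_const, nsmul_eq_mul]
    rfl
  rw [← sum_filter_add_sum_filter_not _ fun j => (G.deleteEdges {k}).Reachable i j, hsame, hother,
    ← splitC_add_splitF i k]
  push_cast
  field_simp
  ring

theorem splitC_of_mem_incidenceSet {j : V} {e : Sym2 V} (hj : G.degree j = 1)
    (he : e ∈ G.incidenceSet j) : splitC G j e = 1 := by
  rw [splitC, card_eq_one]
  refine ⟨j, eq_singleton_iff_unique_mem.mpr ⟨mem_filter.mpr ⟨mem_phyloLeaves_s2.mpr hj, .rfl⟩,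
    fun v hv => eq_of_reachable_deleteEdges_of_degree_eq_one hj he (mem_filter.mp hv).2⟩⟩

theorem SimpleGraph.Connected.splitF_of_mem_incidenceSet (hG : G.Connected) {i j : V}
    {e : Sym2 V} (hj : G.degree j = 1) (he : e ∈ G.incidenceSet j) (hij : i ≠ j) :
    splitF G i e = 1 := by
  rw [hG.splitF_eq_splitC_of_not_reachable fun h =>
    hij (eq_of_reachable_deleteEdges_of_degree_eq_one hj he h), splitC_of_mem_incidenceSet hj he]

theorem SimpleGraph.Connected.shapleyMatrix_of_mem_incidenceSet (hG : G.Connected) (i : PLeaf G)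
    {j : V} (hj : G.degree j = 1) {e : PEdge G} (he : e.1 ∈ G.incidenceSet j) :
    shapleyMatrix G i e = if i.1 = j then ((#(phyloLeaves G) : ℝ) - 1) / #(phyloLeaves G)
      else 1 / (#(phyloLeaves G) * ((#(phyloLeaves G) : ℝ) - 1)) := by
  have hcf : (splitC G i e.1 : ℝ) + splitF G i e.1 = #(phyloLeaves G) := by
    rw [← Nat.cast_add, splitC_add_splitF]
  rw [shapleyMatrix]
  split_ifs with hij
  · subst hij
    rw [eq_sub_of_add_eq' hcf, splitC_of_mem_incidenceSet hj he]
    ring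
  · rw [eq_sub_of_add_eq hcf, hG.splitF_of_mem_incidenceSet hj he hij]
    ring

theorem sum_pendant_eq_sum_phyloLeaves {M : Type*} [AddCommMonoid M]
    (hleaves : ∀ j j', G.degree j = 1 → G.degree j' = 1 → ¬ G.Adj j j') {g : PEdge G → M}
    {φ : V → M} (hg : ∀ j, G.degree j = 1 → ∀ e : PEdge G, j ∈ e.1 → g e = φ j) :
    ∑ e with ∃ v ∈ e.1, G.degree v = 1, g e = ∑ j ∈ phyloLeaves G, φ j := by
  have hnb : ∀ j ∈ phyloLeaves G, ∃ u, G.Adj j u := fun j hj =>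
    (degree_eq_one_iff_existsUnique_adj.mp (mem_phyloLeaves_s2.mp hj)).exists
  choose nb hnb using hnb
  symm
  refine sum_bij (fun j hj => ⟨s(j, nb j hj), hnb j hj⟩) (fun j hj => ?_)
    (fun j hj j' hj' h => ?_) (fun e he => ?_) (fun j hj => ?_)
  · exact mem_filter.mpr ⟨mem_univ _, j, Sym2.mem_mk_left .., mem_phyloLeaves_s2.mp hj⟩
  · rcases Sym2.eq_iff.mp (Subtype.mk.inj h) with ⟨h', -⟩ | ⟨-, h'⟩
    · exact h'
    · exact (hleaves _ _ (mem_phyloLeaves_s2.mp hj) (mem_phyloLeaves_s2.mp hj') (h' ▸ hnb j hj)).elim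
  · obtain ⟨v, hv, hdeg⟩ := (mem_filter.mp he).2
    exact ⟨v, mem_phyloLeaves_s2.mpr hdeg, Subtype.ext <| incidenceSet_subsingleton_of_degree_eq_one
      hdeg ⟨hnb v _, Sym2.mem_mk_left ..⟩ ⟨e.2, hv⟩⟩
  · exact (hg j (mem_phyloLeaves_s2.mp hj) _ (Sym2.mem_mk_left ..)).symm

end SplitCounts

theorem shapley_row_identity {n c f : ℝ} (hcf : c + f = n) (hc : c ≠ 0) (hn : 4 ≤ n) :
    1 / (n * (n - 1)) * -1 + ((n - 1) / n - 1 / (n * (n - 1))) * -((f - 1) / ((n - 2) * c)) +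
      f / (n * c) = 0 := by
  have hn0 : n ≠ 0 := by linarith
  have hn1 : n - 1 ≠ 0 := by linarith
  have hn2 : n - 2 ≠ 0 := by linarith
  field_simp
  linear_combination (2 - n) * hcf

theorem sum_ite_mul {ι R : Type*} [CommRing R] [DecidableEq ι] {s : Finset ι} {i : ι}
    (hi : i ∈ s) (a b : R) (g : ι → R) :
    ∑ j ∈ s, (if i = j then a else b) * g j = b * ∑ j ∈ s, g j + (a - b) * g i := by
  rw [mul_sum, ← sum_ite_eq_of_mem s i (fun j => (a - b) * g j) hi, ← sum_add_distrib]
  exact sum_congr rfl fun j _ => by split_ifs <;> ring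

theorem shapley_null_vector_general {V : Type*} [Fintype V] (G : SimpleGraph V)
    (hT : G.IsTree)
    (hn : 4 ≤ (phyloLeaves G).card)
    (I : PEdge G) (hI : ∀ v, v ∈ I.1 → G.degree v ≠ 1)
    (x : PEdge G → ℝ)
    (hpend : ∀ i : V, G.degree i = 1 → ∀ e : PEdge G, i ∈ e.1 →
      x e = -(((splitF G i I.1 : ℝ) - 1) /
        ((((phyloLeaves G).card : ℝ) - 2) * (splitC G i I.1 : ℝ))))
    (hself : x I = 1)
    (hother : ∀ e : PEdge G, e ≠ I → (∀ v, v ∈ e.1 → G.degree v ≠ 1) → x e = 0) :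
    (shapleyMatrix G).mulVec x = 0 := by
  have hG := hT.connected
  have hn' : (4 : ℝ) ≤ (phyloLeaves G).card := by exact_mod_cast hn
  set n : ℝ := ((phyloLeaves G).card : ℝ)
  set X : V → ℝ := fun j => -(((splitF G j I.1 : ℝ) - 1) / ((n - 2) * splitC G j I.1))
  ext i
  have hc := splitC_pos i.2 I.1
  have hsum : ∑ j ∈ phyloLeaves G, X j = -1 := by
    simp only [X, div_mul_eq_div_div_swap, sum_neg_distrib, ← sum_div,
      hG.sum_splitF_sub_one_div_splitC hc.ne' (hT.splitF_pos I.2 i.1).ne']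
    change -((n - 2) / (n - 2)) = -1
    rw [div_self (by linarith)]
  have hcf : (splitC G i I.1 : ℝ) + splitF G i I.1 = n := by
    rw [← Nat.cast_add, splitC_add_splitF]
  change ∑ e, shapleyMatrix G i e * x e = 0
  rw [← sum_filter_add_sum_filter_not _ fun e => ∃ v ∈ e.1, G.degree v = 1,
    sum_pendant_eq_sum_phyloLeaves (fun _ _ => hG.not_adj_of_degree_eq_one (hI _ I.1.out_fst_mem))
      fun j hj e hje => by
        rw [hG.shapleyMatrix_of_mem_incidenceSet i hj ⟨e.2, hje⟩, hpend j hj e hje],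
    sum_eq_single_of_mem I (by simpa using hI) fun e he heI => by
      rw [hother e heI (by simpa using he), mul_zero],
    hself, mul_one, sum_ite_mul (mem_phyloLeaves_s2.mpr i.2), hsum]
  exact shapley_row_identity hcf (by positivity) hn'

/-- For an unrooted binary phylogenetic tree with `n ≥ 4` leaves and an
internal edge `I`, the vector whose entry at the pendant edge of leaf `i` is
`−(f(i,I) − 1)/((n−2)·c(i,I))`, whose entry at `I` is `1`, and which vanishes at every other
internal edge, lies in the null space of the Shapley transformation matrix. -/
theorem shapley_null_vector {V : Type*} [Fintype V] (G : SimpleGraph V)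
    (hT : G.IsTree) (hdeg : ∀ v, G.degree v = 1 ∨ G.degree v = 3)
    (hn : 4 ≤ (phyloLeaves G).card)
    (I : PEdge G) (hI : ∀ v, v ∈ I.1 → G.degree v ≠ 1)
    (x : PEdge G → ℝ)
    (hpend : ∀ i : V, G.degree i = 1 → ∀ e : PEdge G, i ∈ e.1 →
      x e = -(((splitF G i I.1 : ℝ) - 1) /
        ((((phyloLeaves G).card : ℝ) - 2) * (splitC G i I.1 : ℝ))))
    (hself : x I = 1)
    (hother : ∀ e : PEdge G, e ≠ I → (∀ v, v ∈ e.1 → G.degree v ≠ 1) → x e = 0) :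
    (shapleyMatrix G).mulVec x = 0 :=
  shapley_null_vector_general G hT hn I hI x hpend hself hother
end
end

section
/- For every real number k ≥ 1 and every real ε with 0 < ε < √((k+2)/(k³+3k²−2)) (note k³+3k²−2 > 0 for k ≥ 1), the following strict inequality holds: (k+1)/(ε·(2k²+k)) + ε/(2k²+k) > k/(ε·(2k²+3k+1)) + ε·(2k²+5k−1)/(2k²+5k+2). -/
/-! Since `2k²+k = k(2k+1)`, `2k²+3k+1 = (k+1)(2k+1)` and `2k²+5k+2 = (k+2)(2k+1)`, the difference
of the two sides collapses to `((k+2) - ε²(k³+3k²-2)) / (ε k (k+1) (k+2))`, whose numerator is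
positive exactly when `ε² < (k+2)/(k³+3k²-2)`. -/

lemma bound_inequality_sub_eq {k ε : ℝ} (hk : 0 < k) (hε : ε ≠ 0) :
    (k + 1) / (ε * (2 * k ^ 2 + k)) + ε / (2 * k ^ 2 + k)
      - (k / (ε * (2 * k ^ 2 + 3 * k + 1))
        + ε * (2 * k ^ 2 + 5 * k - 1) / (2 * k ^ 2 + 5 * k + 2))
      = ((k + 2) - ε ^ 2 * (k ^ 3 + 3 * k ^ 2 - 2)) / (ε * k * (k + 1) * (k + 2)) := by
  have h₁ : 2 * k ^ 2 + k = k * (2 * k + 1) := by ring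
  have h₂ : 2 * k ^ 2 + 3 * k + 1 = (k + 1) * (2 * k + 1) := by ring
  have h₃ : 2 * k ^ 2 + 5 * k + 2 = (k + 2) * (2 * k + 1) := by ring
  rw [h₁, h₂, h₃]
  field_simp
  ring

/-- For every real `k ≥ 1` and every `ε` with
`0 < ε < √((k+2)/(k³+3k²−2))`, the strict inequality
`(k+1)/(ε(2k²+k)) + ε/(2k²+k) > k/(ε(2k²+3k+1)) + ε(2k²+5k−1)/(2k²+5k+2)` holds. -/
theorem bound_inequality (k ε : ℝ) (hk : 1 ≤ k) (hε : 0 < ε)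
    (hε2 : ε < Real.sqrt ((k + 2) / (k ^ 3 + 3 * k ^ 2 - 2))) :
    (k + 1) / (ε * (2 * k ^ 2 + k)) + ε / (2 * k ^ 2 + k)
      > k / (ε * (2 * k ^ 2 + 3 * k + 1))
        + ε * (2 * k ^ 2 + 5 * k - 1) / (2 * k ^ 2 + 5 * k + 2) := by
  have hcubic : 0 < k ^ 3 + 3 * k ^ 2 - 2 := by nlinarith
  have hsq : ε ^ 2 * (k ^ 3 + 3 * k ^ 2 - 2) < k + 2 :=
    (lt_div_iff₀ hcubic).mp ((Real.lt_sqrt hε.le).mp hε2)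
  rw [gt_iff_lt, ← sub_pos, bound_inequality_sub_eq (by linarith) hε.ne']
  exact div_pos (by linarith) (by positivity)
end
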